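/- arXiv:1901.11446 — 3 statements merged into one kernel-verified Lean document; each statement's English description precedes it below -/
import Mathlib

section
/- For every i∈I one has Δ(k̃_i) = k̃_i ⊗ (K̃_iK̃_{τi}') and Δ(B_i) = B_i ⊗ K̃_i' + 1 ⊗ F_i + k̃_{τi} ⊗ E_{τi}K̃_i'. In particular Δ maps the subalgebra Ũ^ı into Ũ^ı ⊗ Ũ, i.e. Ũ^ı is a right coideal subalgebra of Ũ. -/
noncomputable section

open scoped TensorProduct

/-- The base field `ℚ(v)`. -/
abbrev kk : Type := RatFunc ℚ

/-- The indeterminate `v`. -/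
noncomputable def v : kk := RatFunc.X

/-- Quantum integer `[n] = (v^n - v^{-n})/(v - v^{-1})`. -/
noncomputable def qInt (n : ℕ) : kk := (v ^ (n : ℤ) - v ^ (-(n : ℤ))) / (v - v⁻¹)

/-- Quantum factorial. -/
noncomputable def qFact : ℕ → kk
  | 0 => 1
  | n + 1 => qFact n * qInt (n + 1)

/-- Quantum binomial coefficient. -/
noncomputable def qBinom (m r : ℕ) : kk := qFact m / (qFact r * qFact (m - r))

/-- Generators of the quantum group `Ũ` with doubled Cartan part. -/
inductive Gen (I : Type) : Type
  | E : I → Gen I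
  | F : I → Gen I
  | K : I → Gen I
  | K' : I → Gen I
  | Ki : I → Gen I
  | K'i : I → Gen I

variable {I : Type} [Fintype I] [DecidableEq I]

/-- Canonical generators inside the free algebra. -/
noncomputable def gg (x : Gen I) : FreeAlgebra kk (Gen I) := FreeAlgebra.ι kk x

/-- Defining relations of `Ũ` attached to the symmetric GCM `c`. -/
inductive URel (c : I → I → ℤ) : FreeAlgebra kk (Gen I) → FreeAlgebra kk (Gen I) → Prop
  | KKi (i : I) : URel c (gg (Gen.K i) * gg (Gen.Ki i)) 1
  | KiK (i : I) : URel c (gg (Gen.Ki i) * gg (Gen.K i)) 1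
  | K'K'i (i : I) : URel c (gg (Gen.K' i) * gg (Gen.K'i i)) 1
  | K'iK' (i : I) : URel c (gg (Gen.K'i i) * gg (Gen.K' i)) 1
  | KK (i j : I) : URel c (gg (Gen.K i) * gg (Gen.K j)) (gg (Gen.K j) * gg (Gen.K i))
  | KKp (i j : I) : URel c (gg (Gen.K i) * gg (Gen.K' j)) (gg (Gen.K' j) * gg (Gen.K i))
  | KpKp (i j : I) : URel c (gg (Gen.K' i) * gg (Gen.K' j)) (gg (Gen.K' j) * gg (Gen.K' i))
  | EF (i j : I) : URel c (gg (Gen.E i) * gg (Gen.F j) - gg (Gen.F j) * gg (Gen.E i))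
      (if i = j then ((v - v⁻¹)⁻¹) • (gg (Gen.K i) - gg (Gen.K' i)) else 0)
  | KE (i j : I) :
      URel c (gg (Gen.K i) * gg (Gen.E j)) ((v ^ (c i j)) • (gg (Gen.E j) * gg (Gen.K i)))
  | KF (i j : I) :
      URel c (gg (Gen.K i) * gg (Gen.F j)) ((v ^ (-(c i j))) • (gg (Gen.F j) * gg (Gen.K i)))
  | KpE (i j : I) :
      URel c (gg (Gen.K' i) * gg (Gen.E j)) ((v ^ (-(c i j))) • (gg (Gen.E j) * gg (Gen.K' i)))
  | KpF (i j : I) :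
      URel c (gg (Gen.K' i) * gg (Gen.F j)) ((v ^ (c i j)) • (gg (Gen.F j) * gg (Gen.K' i)))
  | serreE (i j : I) (hij : i ≠ j) :
      URel c (∑ r ∈ Finset.range ((1 - c i j).toNat + 1),
        ((-1 : kk) ^ r * qBinom (1 - c i j).toNat r) •
          (gg (Gen.E i) ^ r * gg (Gen.E j) * gg (Gen.E i) ^ ((1 - c i j).toNat - r))) 0
  | serreF (i j : I) (hij : i ≠ j) :
      URel c (∑ r ∈ Finset.range ((1 - c i j).toNat + 1),
        ((-1 : kk) ^ r * qBinom (1 - c i j).toNat r) •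
          (gg (Gen.F i) ^ r * gg (Gen.F j) * gg (Gen.F i) ^ ((1 - c i j).toNat - r))) 0

/-- The quantum group `Ũ` with doubled Cartan part, presented by generators and relations. -/
abbrev Utilde (c : I → I → ℤ) : Type := RingQuot (URel c)

noncomputable def UE (c : I → I → ℤ) (i : I) : Utilde c :=
  RingQuot.mkAlgHom kk (URel c) (gg (Gen.E i))
noncomputable def UF (c : I → I → ℤ) (i : I) : Utilde c :=
  RingQuot.mkAlgHom kk (URel c) (gg (Gen.F i))
noncomputable def UK (c : I → I → ℤ) (i : I) : Utilde c :=
  RingQuot.mkAlgHom kk (URel c) (gg (Gen.K i))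
noncomputable def UK' (c : I → I → ℤ) (i : I) : Utilde c :=
  RingQuot.mkAlgHom kk (URel c) (gg (Gen.K' i))
noncomputable def UKi (c : I → I → ℤ) (i : I) : Utilde c :=
  RingQuot.mkAlgHom kk (URel c) (gg (Gen.Ki i))
noncomputable def UK'i (c : I → I → ℤ) (i : I) : Utilde c :=
  RingQuot.mkAlgHom kk (URel c) (gg (Gen.K'i i))

/-- `B_i = F_i + E_{τi} K̃_i'`. -/
noncomputable def iB (c : I → I → ℤ) (τ : I → I) (i : I) : Utilde c :=
  UF c i + UE c (τ i) * UK' c i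

/-- `k̃_i = K̃_i K̃_{τi}'`. -/
noncomputable def ik (c : I → I → ℤ) (τ : I → I) (i : I) : Utilde c :=
  UK c i * UK' c (τ i)

/-- The inverse of `k̃_i`. -/
noncomputable def ikinv (c : I → I → ℤ) (τ : I → I) (i : I) : Utilde c :=
  UKi c i * UK'i c (τ i)

/-- The `ı`quantum group `Ũ^ı`, the subalgebra of `Ũ` generated by the `B_i` and `k̃_i^{±1}`. -/
noncomputable def Uiota (c : I → I → ℤ) (τ : I → I) : Subalgebra kk (Utilde c) :=
  Algebra.adjoin kk (Set.range (iB c τ) ∪ Set.range (ik c τ) ∪ Set.range (ikinv c τ))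

section Aux

variable (c : I → I → ℤ) (τ : I → I)

lemma UK_UKi (i : I) : UK c i * UKi c i = 1 := by
  have := RingQuot.mkAlgHom_rel kk (URel.KKi (c := c) i)
  simpa [UK, UKi, gg, map_mul] using this

lemma UKi_UK (i : I) : UKi c i * UK c i = 1 := by
  have := RingQuot.mkAlgHom_rel kk (URel.KiK (c := c) i)
  simpa [UK, UKi, gg, map_mul] using this

lemma UK'_UK'i (i : I) : UK' c i * UK'i c i = 1 := by
  have := RingQuot.mkAlgHom_rel kk (URel.K'K'i (c := c) i)
  simpa [UK', UK'i, gg, map_mul] using this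

lemma UK'i_UK' (i : I) : UK'i c i * UK' c i = 1 := by
  have := RingQuot.mkAlgHom_rel kk (URel.K'iK' (c := c) i)
  simpa [UK', UK'i, gg, map_mul] using this

end Aux

/-- `Δ(k̃_i) = k̃_i ⊗ K̃_iK̃_{τi}'` and
`Δ(B_i) = B_i ⊗ K̃_i' + 1 ⊗ F_i + k̃_{τi} ⊗ E_{τi}K̃_i'`; in particular
`Ũ^ı` is a right coideal subalgebra of `Ũ`. -/
theorem coideal (c : I → I → ℤ)
    (hsymm : ∀ i j, c i j = c j i) (hdiag : ∀ i, c i i = 2)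
    (hoff : ∀ i j, i ≠ j → c i j ≤ 0)
    (τ : I → I) (hτ : ∀ i, τ (τ i) = i) (hcτ : ∀ i j, c (τ i) (τ j) = c i j)
    (Δ : Utilde c →ₐ[kk] (Utilde c ⊗[kk] Utilde c))
    (hΔE : ∀ i, Δ (UE c i) = UE c i ⊗ₜ[kk] 1 + UK c i ⊗ₜ[kk] UE c i)
    (hΔF : ∀ i, Δ (UF c i) = 1 ⊗ₜ[kk] UF c i + UF c i ⊗ₜ[kk] UK' c i)
    (hΔK : ∀ i, Δ (UK c i) = UK c i ⊗ₜ[kk] UK c i)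
    (hΔK' : ∀ i, Δ (UK' c i) = UK' c i ⊗ₜ[kk] UK' c i) :
    (∀ i, Δ (ik c τ i) = ik c τ i ⊗ₜ[kk] (UK c i * UK' c (τ i))) ∧
    (∀ i, Δ (iB c τ i) =
      iB c τ i ⊗ₜ[kk] UK' c i + 1 ⊗ₜ[kk] UF c i
        + ik c τ (τ i) ⊗ₜ[kk] (UE c (τ i) * UK' c i)) ∧
    (∀ x ∈ Uiota c τ,
      Δ x ∈ (Algebra.TensorProduct.map (Uiota c τ).val (AlgHom.id kk (Utilde c))).range) := by
  have hΔKi : ∀ i, Δ (UKi c i) = UKi c i ⊗ₜ[kk] UKi c i := by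
    intro i
    refine left_inv_eq_right_inv (b := Δ (UKi c i)) (a := UK c i ⊗ₜ[kk] UK c i) ?_ ?_
    · rw [← hΔK, ← map_mul, UKi_UK, map_one]
    · rw [Algebra.TensorProduct.tmul_mul_tmul, UK_UKi, Algebra.TensorProduct.one_def]
  have hΔK'i : ∀ i, Δ (UK'i c i) = UK'i c i ⊗ₜ[kk] UK'i c i := by
    intro i
    refine left_inv_eq_right_inv (b := Δ (UK'i c i)) (a := UK' c i ⊗ₜ[kk] UK' c i) ?_ ?_
    · rw [← hΔK', ← map_mul, UK'i_UK', map_one]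
    · rw [Algebra.TensorProduct.tmul_mul_tmul, UK'_UK'i, Algebra.TensorProduct.one_def]
  have hik : ∀ i, Δ (ik c τ i) = ik c τ i ⊗ₜ[kk] (UK c i * UK' c (τ i)) := by
    intro i
    rw [ik, map_mul, hΔK, hΔK', Algebra.TensorProduct.tmul_mul_tmul]
  have hiB : ∀ i, Δ (iB c τ i) =
      iB c τ i ⊗ₜ[kk] UK' c i + 1 ⊗ₜ[kk] UF c i
        + ik c τ (τ i) ⊗ₜ[kk] (UE c (τ i) * UK' c i) := by
    intro i
    simp only [iB, ik, hτ]
    rw [map_add, map_mul, hΔE, hΔF, hΔK', add_mul,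
      Algebra.TensorProduct.tmul_mul_tmul, Algebra.TensorProduct.tmul_mul_tmul,
      one_mul, TensorProduct.add_tmul]
    abel
  refine ⟨hik, hiB, ?_⟩
  intro x hx
  set R := (Algebra.TensorProduct.map (Uiota c τ).val (AlgHom.id kk (Utilde c))).range
  have htm : ∀ a, a ∈ Uiota c τ → ∀ b : Utilde c, a ⊗ₜ[kk] b ∈ R := by
    intro a ha b
    exact ⟨(⟨a, ha⟩ : Uiota c τ) ⊗ₜ[kk] b, rfl⟩
  have hBmem : ∀ i, iB c τ i ∈ Uiota c τ := fun i =>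
    Algebra.subset_adjoin (Or.inl (Or.inl ⟨i, rfl⟩))
  have hkmem : ∀ i, ik c τ i ∈ Uiota c τ := fun i =>
    Algebra.subset_adjoin (Or.inl (Or.inr ⟨i, rfl⟩))
  have hkimem : ∀ i, ikinv c τ i ∈ Uiota c τ := fun i =>
    Algebra.subset_adjoin (Or.inr ⟨i, rfl⟩)
  induction hx using Algebra.adjoin_induction with
  | mem y hy =>
    rcases hy with (⟨i, rfl⟩ | ⟨i, rfl⟩) | ⟨i, rfl⟩
    · rw [hiB]
      exact add_mem (add_mem (htm _ (hBmem i) _) (htm _ (one_mem _) _))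
        (htm _ (hkmem (τ i)) _)
    · rw [hik]
      exact htm _ (hkmem i) _
    · have : Δ (ikinv c τ i) = ikinv c τ i ⊗ₜ[kk] (UKi c i * UK'i c (τ i)) := by
        rw [ikinv, map_mul, hΔKi, hΔK'i, Algebra.TensorProduct.tmul_mul_tmul]
      rw [this]
      exact htm _ (hkimem i) _
  | algebraMap r =>
    rw [AlgHom.commutes]
    exact Subalgebra.algebraMap_mem R r
  | add x y hx hy ihx ihy => rw [map_add]; exact add_mem ihx ihy
  | mul x y hx hy ihx ihy => rw [map_mul]; exact mul_mem ihx ihy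
end
end

section
/- In Ũ, if τi ≠ i and c_{i,τi} = 0, then B_{τi}B_i − B_iB_{τi} = (k̃_i − k̃_{τi})/(v − v^{-1}), where B_i = F_i + E_{τi}K̃_i' and k̃_i = K̃_iK̃_{τi}'. -/
noncomputable section

open scoped TensorProduct

variable {I : Type} [Fintype I] [DecidableEq I]

lemma v_ne_zero : (v : kk) ≠ 0 := RatFunc.X_ne_zero

lemma vv_ne_zero : (v - v⁻¹ : kk) ≠ 0 := by
  intro h
  have h2 : (v : kk) = v⁻¹ := sub_eq_zero.mp h
  have h3 : (v * v : kk) = 1 := by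
    nth_rewrite 2 [h2]
    exact mul_inv_cancel₀ v_ne_zero
  have h4 := congrArg RatFunc.intDegree h3
  rw [RatFunc.intDegree_mul v_ne_zero v_ne_zero, RatFunc.intDegree_one,
    show (v : kk) = RatFunc.X from rfl, RatFunc.intDegree_X] at h4
  omega

lemma qInt_one : qInt 1 = 1 := by
  unfold qInt
  rw [Nat.cast_one, zpow_one, zpow_neg, zpow_one]
  exact div_self vv_ne_zero

lemma qFact_one : qFact 1 = 1 := by
  show qFact 0 * qInt (0 + 1) = 1
  rw [qInt_one]
  simp [qFact]

lemma qBinom_one_zero : qBinom 1 0 = 1 := by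
  simp [qBinom, qFact, qInt_one]

lemma qBinom_one_one : qBinom 1 1 = 1 := by
  simp [qBinom, qFact, qInt_one]

lemma Urel_eq {c : I → I → ℤ} {x y : FreeAlgebra kk (Gen I)} (h : URel c x y) :
    RingQuot.mkAlgHom kk (URel c) x = RingQuot.mkAlgHom kk (URel c) y :=
  RingQuot.mkAlgHom_rel kk h

lemma UKp_UE (c : I → I → ℤ) (i j : I) :
    UK' c i * UE c j = (v ^ (-(c i j))) • (UE c j * UK' c i) := by
  have h := Urel_eq (URel.KpE (c := c) i j)
  simp only [map_mul, map_smul] at h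
  exact h

lemma UKp_UF_comm (c : I → I → ℤ) (i j : I) (h0 : c i j = 0) :
    UK' c i * UF c j = UF c j * UK' c i := by
  have h := Urel_eq (URel.KpF (c := c) i j)
  rw [h0] at h
  simp only [map_mul, map_smul, neg_zero, zpow_zero, one_smul] at h
  exact h

lemma UKp_UKp_comm (c : I → I → ℤ) (i j : I) :
    UK' c i * UK' c j = UK' c j * UK' c i := by
  have h := Urel_eq (URel.KpKp (c := c) i j)
  simp only [map_mul] at h
  exact h

lemma UEF_self (c : I → I → ℤ) (i : I) :
    UE c i * UF c i - UF c i * UE c i = ((v - v⁻¹)⁻¹) • (UK c i - UK' c i) := by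
  have h := Urel_eq (URel.EF (c := c) i i)
  rw [if_pos rfl] at h
  simp only [map_sub, map_mul, map_smul] at h
  exact h

lemma UF_comm (c : I → I → ℤ) {i j : I} (hij : i ≠ j) (h0 : c i j = 0) :
    UF c j * UF c i = UF c i * UF c j := by
  have h := Urel_eq (URel.serreF (c := c) i j hij)
  rw [h0] at h
  norm_num [Finset.sum_range_succ, Finset.sum_range_one, qBinom_one_zero,
    qBinom_one_one] at h
  rw [add_neg_eq_zero] at h
  exact h

lemma UE_comm (c : I → I → ℤ) {i j : I} (hij : i ≠ j) (h0 : c i j = 0) :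
    UE c j * UE c i = UE c i * UE c j := by
  have h := Urel_eq (URel.serreE (c := c) i j hij)
  rw [h0] at h
  norm_num [Finset.sum_range_succ, Finset.sum_range_one, qBinom_one_zero,
    qBinom_one_one] at h
  rw [add_neg_eq_zero] at h
  exact h

/-- In `Ũ`, if `τi ≠ i` and `c_{i,τi} = 0`, then
`B_{τi}B_i − B_iB_{τi} = (k̃_i − k̃_{τi})/(v − v^{-1})`. -/
theorem B_pair_commutator (c : I → I → ℤ)
    (hsymm : ∀ i j, c i j = c j i) (hdiag : ∀ i, c i i = 2)
    (hoff : ∀ i j, i ≠ j → c i j ≤ 0)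
    (τ : I → I) (hτ : ∀ i, τ (τ i) = i) (hcτ : ∀ i j, c (τ i) (τ j) = c i j)
    (i : I) (hne : τ i ≠ i) (hc0 : c i (τ i) = 0) :
    iB c τ (τ i) * iB c τ i - iB c τ i * iB c τ (τ i)
      = ((v - v⁻¹)⁻¹) • (ik c τ i - ik c τ (τ i)) := by
  have hc0' : c (τ i) i = 0 := by rw [hsymm]; exact hc0
  set Fi := UF c i with hFi
  set Fτ := UF c (τ i) with hFτ
  set Ei := UE c i with hEi
  set Eτ := UE c (τ i) with hEτ
  set Ki := UK c i with hKi
  set Kτ := UK c (τ i) with hKτ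
  set K'i := UK' c i with hK'i
  set K'τ := UK' c (τ i) with hK'τ
  have h1 : Fi * Fτ = Fτ * Fi := UF_comm c (i := τ i) (j := i) hne hc0'
  have he1 : Eτ * Ei = Ei * Eτ := UE_comm c (i := i) (j := τ i) hne.symm hc0
  have h2 : K'τ * Fi = Fi * K'τ := UKp_UF_comm c (τ i) i hc0'
  have h3 : K'i * Fτ = Fτ * K'i := UKp_UF_comm c i (τ i) hc0
  have hk5 : K'τ * K'i = K'i * K'τ := UKp_UKp_comm c (τ i) i
  have hki : K'i * Ei = (v ^ (-(2:ℤ))) • (Ei * K'i) := by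
    have h := UKp_UE c i i
    rw [hdiag i] at h
    exact h
  have hkτ : K'τ * Eτ = (v ^ (-(2:ℤ))) • (Eτ * K'τ) := by
    have h := UKp_UE c (τ i) (τ i)
    rw [hdiag (τ i)] at h
    exact h
  have e2 : (Ei * K'τ) * Fi = (Ei * Fi) * K'τ := by
    rw [mul_assoc, h2, ← mul_assoc]
  have e3 : (Eτ * K'i) * Fτ = (Eτ * Fτ) * K'i := by
    rw [mul_assoc, h3, ← mul_assoc]
  have l1 : (Ei * K'τ) * (Eτ * K'i) = (v ^ (-(2:ℤ))) • ((Ei * Eτ) * (K'τ * K'i)) := by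
    rw [show (Ei * K'τ) * (Eτ * K'i) = Ei * (K'τ * Eτ) * K'i by noncomm_ring, hkτ,
      mul_smul_comm, smul_mul_assoc]
    congr 1
    noncomm_ring
  have l2 : (Eτ * K'i) * (Ei * K'τ) = (v ^ (-(2:ℤ))) • ((Eτ * Ei) * (K'i * K'τ)) := by
    rw [show (Eτ * K'i) * (Ei * K'τ) = Eτ * (K'i * Ei) * K'τ by noncomm_ring, hki,
      mul_smul_comm, smul_mul_assoc]
    congr 1
    noncomm_ring
  have h4 : (Ei * K'τ) * (Eτ * K'i) = (Eτ * K'i) * (Ei * K'τ) := by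
    rw [l1, l2, he1, hk5]
  have hef1 : Ei * Fi - Fi * Ei = ((v - v⁻¹)⁻¹) • (Ki - K'i) := UEF_self c i
  have hef2 : Eτ * Fτ - Fτ * Eτ = ((v - v⁻¹)⁻¹) • (Kτ - K'τ) := UEF_self c (τ i)
  have hiBτ : iB c τ (τ i) = Fτ + Ei * K'τ := by
    rw [iB, hτ i]
  have hiBi : iB c τ i = Fi + Eτ * K'i := rfl
  have hikτ : ik c τ (τ i) = Kτ * K'i := by
    rw [ik, hτ i]
  have hiki : ik c τ i = Ki * K'τ := rfl
  rw [hiBτ, hiBi, hikτ, hiki]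
  calc (Fτ + Ei * K'τ) * (Fi + Eτ * K'i) - (Fi + Eτ * K'i) * (Fτ + Ei * K'τ)
      = Fτ * Fi + (Fτ * Eτ) * K'i + (Ei * K'τ) * Fi + (Ei * K'τ) * (Eτ * K'i)
        - (Fi * Fτ + (Fi * Ei) * K'τ + (Eτ * K'i) * Fτ + (Eτ * K'i) * (Ei * K'τ)) := by
        noncomm_ring
    _ = (Ei * Fi - Fi * Ei) * K'τ - (Eτ * Fτ - Fτ * Eτ) * K'i := by
        rw [e2, e3, h4, h1, sub_mul, sub_mul]
        abel
    _ = (((v - v⁻¹)⁻¹) • (Ki - K'i)) * K'τ - (((v - v⁻¹)⁻¹) • (Kτ - K'τ)) * K'i := by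
        rw [hef1, hef2]
    _ = ((v - v⁻¹)⁻¹) • (Ki * K'τ - Kτ * K'i) := by
        rw [smul_mul_assoc, smul_mul_assoc, sub_mul, sub_mul, hk5]
        simp only [smul_sub]
        abel
end
end

section
/- Let Q be a finite acyclic quiver and k a field. A finite-dimensional representation N = (N_i, N(α)) of Q is a projective kQ-module if and only if for every vertex i the canonical map ⊕_{α: j→i} N_j → N_i, whose component at an arrow α: j→i is N(α), is injective. -/
/-!
Write `eᵢ` for the trivial paths and `J M = Σₐ a M` for the arrow part of a module `M`.

Every element of `kQ` is uniquely `Σᵢ cᵢ eᵢ + Σₐ a xₐ` with `xₐ ∈ e_{s a} kQ`; uniqueness comes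
from an explicit action of `kQ` on `k^V × kQ^A`. Hence `kQ` has injective arrow maps, and so does
every projective module, being a submodule of a free one.

Conversely, acyclicity allows induction along the arrows. It first shows that `J M ≠ M` when
`M ≠ 0`, so that some `v ∈ eᵢ M` lies outside `J M`. Injectivity of the arrow maps then shows
that `r ↦ r v` is injective on `kQ eᵢ`, so `kQ v ≅ kQ eᵢ` is projective. The quotient
`M / kQ v` again has injective arrow maps, so it is projective by induction on `dim M`, and
`M ≅ kQ v ⊕ M / kQ v`.
-/

noncomputable section

variable (k : Type) [Field k]

/-- Generators of the path algebra of a quiver: trivial paths and arrows. -/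
inductive PGen (V A : Type) : Type
  | vert : V → PGen V A
  | arr : A → PGen V A

noncomputable def pg {V A : Type} (x : PGen V A) : FreeAlgebra k (PGen V A) :=
  FreeAlgebra.ι k x

/-- The defining relations of the path algebra of the quiver with vertex set `V`, arrow
set `A`, source `s` and target `t`: the trivial paths `e_i` are orthogonal idempotents
summing to `1`, and `e_{t a} · a = a = a · e_{s a}`. -/
inductive PathRel (V A : Type) [Fintype V] (s t : A → V) :
    FreeAlgebra k (PGen V A) → FreeAlgebra k (PGen V A) → Prop
  | idem (i : V) : PathRel V A s t (pg k (PGen.vert i) * pg k (PGen.vert i)) (pg k (PGen.vert i))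
  | orth (i j : V) (hij : i ≠ j) : PathRel V A s t (pg k (PGen.vert i) * pg k (PGen.vert j)) 0
  | unit : PathRel V A s t (∑ i : V, pg k (PGen.vert i)) 1
  | src (a : A) : PathRel V A s t (pg k (PGen.arr a) * pg k (PGen.vert (s a))) (pg k (PGen.arr a))
  | tgt (a : A) : PathRel V A s t (pg k (PGen.vert (t a)) * pg k (PGen.arr a)) (pg k (PGen.arr a))
  | src0 (a : A) (i : V) (hi : i ≠ s a) : PathRel V A s t (pg k (PGen.arr a) * pg k (PGen.vert i)) 0
  | tgt0 (a : A) (i : V) (hi : i ≠ t a) : PathRel V A s t (pg k (PGen.vert i) * pg k (PGen.arr a)) 0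

/-- The path algebra `kQ` of a quiver, given by its standard presentation. -/
abbrev PathAlg (V A : Type) [Fintype V] (s t : A → V) : Type :=
  RingQuot (PathRel k V A s t)

/-- The trivial path `e_i` in the path algebra. -/
noncomputable def pv (V A : Type) [Fintype V] (s t : A → V) (i : V) : PathAlg k V A s t :=
  RingQuot.mkAlgHom k (PathRel k V A s t) (pg k (PGen.vert i))

/-- The class of an arrow in the path algebra. -/
noncomputable def pa (V A : Type) [Fintype V] (s t : A → V) (a : A) : PathAlg k V A s t :=
  RingQuot.mkAlgHom k (PathRel k V A s t) (pg k (PGen.arr a))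

theorem Module.Projective.of_submodule_quotient {R M : Type*} [Ring R] [AddCommGroup M]
    [Module R M] (N : Submodule R M) [Module.Projective R N] [Module.Projective R (M ⧸ N)] :
    Module.Projective R M := by
  obtain ⟨l, hl⟩ := N.mkQ.exists_rightInverse_of_surjective N.range_mkQ
  exact .of_equiv'
    ((LinearMap.exact_subtype_mkQ N).splitSurjectiveEquiv N.injective_subtype ⟨l, hl⟩).1.symm

theorem Module.Projective.span_singleton_of_isIdempotentElem {R M : Type*} [Ring R]
    [AddCommGroup M] [Module R M] {e : R} (he : IsIdempotentElem e) {m : M}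
    (h : ∀ r : R, r • m = 0 ↔ r * e = 0) : Module.Projective R (R ∙ m) := by
  have : Module.Projective R (R ∙ e) := by
    refine .of_split (R ∙ e).subtype ((LinearMap.toSpanSingleton R R e).codRestrict _
      fun r => Submodule.smul_mem _ r (Submodule.mem_span_singleton_self e)) ?_
    ext ⟨x, hx⟩
    obtain ⟨r, rfl⟩ := Submodule.mem_span_singleton.1 hx
    change r * e * e = r * e
    rw [mul_assoc, he.eq]
  have htors : Ideal.torsionOf R R e = Ideal.torsionOf R M m := by
    ext r
    simp [Ideal.mem_torsionOf_iff, h]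
  exact .of_equiv' ((Ideal.quotTorsionOfEquivSpanSingleton R R e).symm ≪≫ₗ
    Submodule.quotEquivOfEq _ _ htors ≪≫ₗ Ideal.quotTorsionOfEquivSpanSingleton R M m)

theorem Submodule.finrank_quotient_lt {K R M : Type*} [Field K] [Ring R] [AddCommGroup M]
    [Module R M] [Module K M] [SMul K R] [IsScalarTower K R M] [Module.Finite K M]
    (N : Submodule R M) (hN : N ≠ ⊥) : Module.finrank K (M ⧸ N) < Module.finrank K M := by
  rw [← (Submodule.Quotient.restrictScalarsEquiv K N).finrank_eq,
    ← (N.restrictScalars K).finrank_quotient_add_finrank, lt_add_iff_pos_right,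
    Nat.pos_iff_ne_zero, Ne, Submodule.finrank_eq_zero, Submodule.restrictScalars_eq_bot_iff]
  exact hN

namespace PathAlg

variable {k} {V A : Type} {s t : A → V}

def IsAcyclic (s t : A → V) : Prop :=
  ∀ (n : ℕ) (p : Fin (n + 1) → A),
    (∀ m : Fin n, t (p m.castSucc) = s (p m.succ)) → s (p 0) ≠ t (p (Fin.last n))

theorem IsAcyclic.wellFounded [Finite V] (h : IsAcyclic s t) :
    WellFounded fun j i : V => ∃ a, s a = j ∧ t a = i := by
  refine wellFounded_iff_isEmpty_descending_chain.2 ⟨fun ⟨f, hf⟩ => ?_⟩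
  choose a hs ht using hf
  obtain ⟨m, n, hmn, hfmn⟩ := Finite.exists_ne_map_eq_of_infinite f
  wlog hlt : m < n generalizing m n
  · exact this n m hmn.symm hfmn.symm (lt_of_le_of_ne (not_lt.1 hlt) hmn.symm)
  obtain ⟨d, rfl⟩ : ∃ d, n = m + d + 1 := ⟨n - m - 1, by omega⟩
  -- the arrows `a (m + d), …, a m` form a cycle at `f m`
  refine h d (fun l => a (m + d - l)) (fun l => ?_) ?_
  · rw [ht, hs]
    congr 1
    simp only [Fin.val_castSucc, Fin.val_succ]
    omega
  · rw [hs, ht, Fin.val_zero, Fin.val_last, Nat.sub_zero, Nat.add_sub_cancel, hfmn]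

theorem IsAcyclic.induction [Finite V] (h : IsAcyclic s t) {P : V → Prop}
    (step : ∀ i, (∀ a, t a = i → P (s a)) → P i) (i : V) : P i :=
  h.wellFounded.induction i fun i ih => step i fun a ha => ih (s a) ⟨a, rfl, ha⟩

variable [Fintype V]

local notation "kQ" => PathAlg k V A s t

section Relations

theorem pv_mul_self (i : V) : pv k V A s t i * pv k V A s t i = pv k V A s t i := by
  rw [pv, ← map_mul]
  exact RingQuot.mkAlgHom_rel k (PathRel.idem i)

theorem pv_mul_pv_of_ne {i j : V} (h : i ≠ j) : pv k V A s t i * pv k V A s t j = 0 := by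
  rw [pv, pv, ← map_mul, RingQuot.mkAlgHom_rel k (PathRel.orth i j h), map_zero]

theorem sum_pv : ∑ i, pv k V A s t i = 1 := by
  unfold pv
  simpa only [map_sum, map_one] using RingQuot.mkAlgHom_rel k (PathRel.unit (s := s) (t := t))

theorem pa_mul_pv_src (a : A) : pa k V A s t a * pv k V A s t (s a) = pa k V A s t a := by
  rw [pa, pv, ← map_mul]
  exact RingQuot.mkAlgHom_rel k (PathRel.src a)

theorem pv_tgt_mul_pa (a : A) : pv k V A s t (t a) * pa k V A s t a = pa k V A s t a := by
  rw [pa, pv, ← map_mul]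
  exact RingQuot.mkAlgHom_rel k (PathRel.tgt a)

theorem pv_mul_pa_of_ne {a : A} {i : V} (h : i ≠ t a) :
    pv k V A s t i * pa k V A s t a = 0 := by
  rw [pa, pv, ← map_mul, RingQuot.mkAlgHom_rel k (PathRel.tgt0 a i h), map_zero]

theorem isIdempotentElem_pv (i : V) : IsIdempotentElem (pv k V A s t i) := pv_mul_self i

variable [DecidableEq V]

theorem pv_mul_pv (i j : V) :
    pv k V A s t i * pv k V A s t j = if i = j then pv k V A s t i else 0 := by
  split_ifs with h
  · rw [h, pv_mul_self]
  · exact pv_mul_pv_of_ne h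

theorem pv_mul_pa (i : V) (a : A) :
    pv k V A s t i * pa k V A s t a = if i = t a then pa k V A s t a else 0 := by
  split_ifs with h
  · rw [h, pv_tgt_mul_pa]
  · exact pv_mul_pa_of_ne h

end Relations

theorem induction_on {P : kQ → Prop} (x : kQ) (scalar : ∀ c : k, P (algebraMap k kQ c))
    (vertex : ∀ i, P (pv k V A s t i)) (arrow : ∀ a, P (pa k V A s t a))
    (add : ∀ x y, P x → P y → P (x + y)) (mul : ∀ x y, P x → P y → P (x * y)) : P x := by
  obtain ⟨x, rfl⟩ := RingQuot.mkAlgHom_surjective k (PathRel k V A s t) x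
  induction x using FreeAlgebra.induction with
  | grade0 c => simpa only [AlgHom.commutes] using scalar c
  | grade1 g => cases g with
    | vert i => exact vertex i
    | arr a => exact arrow a
  | mul x y hx hy => simpa only [map_mul] using mul _ _ hx hy
  | add x y hx hy => simpa only [map_add] using add _ _ hx hy

section Model

section Vertices

variable [DecidableEq V]

def vertAct (i : V) : Module.End k ((V → k) × (A → kQ)) :=
  ((LinearMap.single k (fun _ => k) i).comp (LinearMap.proj i)).prodMap
    (LinearMap.pi fun a => if t a = i then LinearMap.proj a else 0)

theorem vertAct_apply (i : V) (w : (V → k) × (A → kQ)) :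
    vertAct i w = (Pi.single i (w.1 i), fun a => if t a = i then w.2 a else 0) := by
  ext a
  · rfl
  · simp only [vertAct, LinearMap.prodMap_apply, LinearMap.pi_apply]
    split_ifs <;> rfl

end Vertices

variable [Fintype A]

def recompose : (V → k) × (A → kQ) →ₗ[k] kQ where
  toFun w := ∑ i, w.1 i • pv k V A s t i + ∑ a, pa k V A s t a * w.2 a
  map_add' w w' := by
    simp only [Prod.fst_add, Prod.snd_add, Pi.add_apply, add_smul, mul_add,
      Finset.sum_add_distrib]
    abel
  map_smul' c w := by
    simp only [Prod.smul_fst, Prod.smul_snd, Pi.smul_apply, smul_eq_mul, mul_smul,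
      mul_smul_comm, Finset.smul_sum, smul_add, RingHom.id_apply]

theorem recompose_apply (w : (V → k) × (A → kQ)) :
    recompose w = ∑ i, w.1 i • pv k V A s t i + ∑ a, pa k V A s t a * w.2 a := rfl

section Arrows

variable [DecidableEq A]

def arrAct (b : A) : Module.End k ((V → k) × (A → kQ)) :=
  LinearMap.inr k _ _ ∘ₗ LinearMap.single k (fun _ => kQ) b ∘ₗ
    LinearMap.mulLeft k (pv k V A s t (s b)) ∘ₗ recompose

theorem arrAct_apply (b : A) (w : (V → k) × (A → kQ)) :
    arrAct b w = (0, Pi.single b (pv k V A s t (s b) * recompose w)) := rfl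

theorem recompose_arrAct (b : A) (w : (V → k) × (A → kQ)) :
    recompose (arrAct b w) = pa k V A s t b * recompose w := by
  simp [recompose_apply, arrAct_apply, Pi.single_apply, ← mul_assoc, pa_mul_pv_src]

end Arrows

variable [DecidableEq V]

theorem recompose_vertAct (i : V) (w : (V → k) × (A → kQ)) :
    recompose (vertAct i w) =
      w.1 i • pv k V A s t i + ∑ a : {a // t a = i}, pa k V A s t a * w.2 a := by
  simp only [recompose_apply, vertAct_apply, mul_ite, mul_zero, Pi.single_apply, ite_smul,
    zero_smul, Finset.sum_ite_eq', Finset.mem_univ, if_true, ← Finset.sum_filter]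
  rw [Finset.sum_subtype (p := (t · = i)) _ (fun a => by simp)]

theorem pv_mul_recompose (i : V) (w : (V → k) × (A → kQ)) :
    pv k V A s t i * recompose w = recompose (vertAct i w) := by
  rw [recompose_vertAct, recompose_apply]
  simp only [mul_add, Finset.mul_sum, mul_smul_comm, pv_mul_pv, ← mul_assoc, pv_mul_pa,
    smul_ite, smul_zero, ite_mul, zero_mul, Finset.sum_ite_eq, Finset.mem_univ, if_true,
    ← Finset.sum_filter]
  rw [Finset.sum_subtype (p := (t · = i)) _ (fun a => by simp [eq_comm])]

variable [DecidableEq A]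

def genAct : PGen V A → Module.End k ((V → k) × (A → kQ))
  | .vert i => vertAct i
  | .arr a => arrAct a

theorem lift_genAct_rel ⦃x y : FreeAlgebra k (PGen V A)⦄ (h : PathRel k V A s t x y) :
    FreeAlgebra.lift k (genAct (k := k) (s := s) (t := t)) x =
      FreeAlgebra.lift k (genAct (k := k) (s := s) (t := t)) y := by
  cases h with
  | idem i =>
    refine LinearMap.ext fun w => Prod.ext (funext fun j => ?_) (funext fun a => ?_)
    · simp [pg, genAct, vertAct_apply]
    · by_cases h : t a = i <;> simp [pg, genAct, vertAct_apply, h]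
  | orth i j hij =>
    refine LinearMap.ext fun w => Prod.ext (funext fun l => ?_) (funext fun a => ?_)
    · simp [pg, genAct, vertAct_apply, hij]
    · simp only [map_mul, pg, FreeAlgebra.lift_ι_apply, genAct, Module.End.mul_apply,
        vertAct_apply, map_zero, LinearMap.zero_apply]
      split_ifs with h1 h2 <;> first | rfl | exact absurd (h1.symm.trans h2) hij
  | unit =>
    refine LinearMap.ext fun w => Prod.ext (funext fun j => ?_) (funext fun a => ?_) <;>
      simp [pg, genAct, vertAct_apply, Prod.fst_sum, Prod.snd_sum, Finset.sum_apply,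
        Pi.single_apply]
  | src b =>
    refine LinearMap.ext fun w => ?_
    simp only [map_mul, pg, FreeAlgebra.lift_ι_apply, genAct, Module.End.mul_apply]
    rw [arrAct_apply, arrAct_apply, ← pv_mul_recompose, ← mul_assoc, pv_mul_self]
  | tgt b =>
    refine LinearMap.ext fun w => Prod.ext (funext fun j => ?_) (funext fun a => ?_)
    · simp [pg, genAct, vertAct_apply, arrAct_apply]
    · by_cases h : a = b
      · subst h; simp [pg, genAct, vertAct_apply, arrAct_apply]
      · simp [pg, genAct, vertAct_apply, arrAct_apply, h]
  | src0 b i hi =>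
    refine LinearMap.ext fun w => ?_
    simp only [map_mul, map_zero, pg, FreeAlgebra.lift_ι_apply, genAct, Module.End.mul_apply]
    rw [arrAct_apply, ← pv_mul_recompose, ← mul_assoc, pv_mul_pv_of_ne (Ne.symm hi), zero_mul,
      Pi.single_zero]
    rfl
  | tgt0 b i hi =>
    refine LinearMap.ext fun w => Prod.ext (funext fun j => ?_) (funext fun a => ?_)
    · simp [pg, genAct, vertAct_apply, arrAct_apply]
    · by_cases h : a = b
      · subst h; simp [pg, genAct, vertAct_apply, arrAct_apply, Ne.symm hi]
      · simp [pg, genAct, vertAct_apply, arrAct_apply, h]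

/-- `kQ` acts on pairs `(c, f)`, which stand for `recompose (c, f) = Σᵢ cᵢ eᵢ + Σₐ a fₐ`.
Acting on `(1, 0)` splits each element of `kQ` into such a sum in a canonical way
(`decompose`), and this pins down the arrow components (`decompose_pa_mul`). -/
def rep : kQ →ₐ[k] Module.End k ((V → k) × (A → kQ)) :=
  RingQuot.liftAlgHom k ⟨FreeAlgebra.lift k genAct, lift_genAct_rel⟩

theorem rep_pv (i : V) : rep (pv k V A s t i) = vertAct i := by
  rw [pv, rep, RingQuot.liftAlgHom_mkAlgHom_apply, pg, FreeAlgebra.lift_ι_apply]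
  rfl

theorem rep_pa (a : A) : rep (pa k V A s t a) = arrAct a := by
  rw [pa, rep, RingQuot.liftAlgHom_mkAlgHom_apply, pg, FreeAlgebra.lift_ι_apply]
  rfl

theorem recompose_rep (r : kQ) (w : (V → k) × (A → kQ)) :
    recompose (rep r w) = r * recompose w := by
  induction r using induction_on generalizing w with
  | scalar c => simp [Algebra.algebraMap_eq_smul_one]
  | vertex i => rw [rep_pv, pv_mul_recompose]
  | arrow a => rw [rep_pa, recompose_arrAct]
  | add x y hx hy => simp only [map_add, LinearMap.add_apply, hx, hy, add_mul]
  | mul x y hx hy => rw [map_mul, Module.End.mul_apply, hx, hy, mul_assoc]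

def decompose : kQ →ₗ[k] (V → k) × (A → kQ) :=
  LinearMap.applyₗ (1, 0) ∘ₗ rep.toLinearMap

theorem decompose_apply (r : kQ) : decompose r = rep r (1, 0) := rfl

theorem recompose_decompose (r : kQ) : recompose (decompose r) = r := by
  rw [decompose_apply, recompose_rep]
  simp [recompose_apply, sum_pv]

theorem decompose_pa_mul (b : A) (r : kQ) :
    decompose (pa k V A s t b * r) = (0, Pi.single b (pv k V A s t (s b) * r)) := by
  rw [decompose_apply, map_mul, Module.End.mul_apply, rep_pa, ← decompose_apply, arrAct_apply,
    recompose_decompose]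

end Model

section ArrowMaps

variable [DecidableEq V] [Fintype A]

theorem exists_pv_mul_eq (x : kQ) (j : V) :
    ∃ (c : k) (y : {a // t a = j} → kQ), (∀ a, pv k V A s t (s a.1) * y a = y a) ∧
      pv k V A s t j * x = c • pv k V A s t j + ∑ a, pa k V A s t a.1 * y a := by
  classical
  refine ⟨(decompose x).1 j, fun a => pv k V A s t (s a.1) * (decompose x).2 a,
    fun a => by rw [← mul_assoc, pv_mul_self], ?_⟩
  conv_lhs => rw [← recompose_decompose x]
  simp only [pv_mul_recompose, recompose_vertAct, ← mul_assoc, pa_mul_pv_src]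

variable (k s t) in
def ArrowMapsInjective (M : Type*) [AddCommGroup M] [Module (PathAlg k V A s t) M] : Prop :=
  ∀ i : V, Set.InjOn (fun x : {a // t a = i} → M => ∑ a, pa k V A s t a.1 • x a)
    {x | ∀ a, pv k V A s t (s a.1) • x a = x a}

variable {M N : Type*} [AddCommGroup M] [Module (PathAlg k V A s t) M] [AddCommGroup N]
  [Module (PathAlg k V A s t) N]

theorem ArrowMapsInjective.of_injective (f : M →ₗ[kQ] N) (hf : Function.Injective f)
    (hN : ArrowMapsInjective k s t N) : ArrowMapsInjective k s t M := by
  intro i x hx y hy hxy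
  have := @hN i (f ∘ x) (fun a => by rw [Function.comp_apply, ← map_smul, hx a]) (f ∘ y)
    (fun a => by rw [Function.comp_apply, ← map_smul, hy a])
    (by simpa only [Function.comp_apply, ← map_smul, ← map_sum] using congrArg f hxy)
  exact funext fun a => hf (congrFun this a)

theorem ArrowMapsInjective.pi {ι : Type*} {N : ι → Type*} [∀ m, AddCommGroup (N m)]
    [∀ m, Module (PathAlg k V A s t) (N m)] (h : ∀ m, ArrowMapsInjective k s t (N m)) :
    ArrowMapsInjective k s t (∀ m, N m) := by
  intro i x hx y hy hxy
  funext a m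
  refine congrFun (@h m i (fun a => x a m) (fun a => congrFun (hx a) m) (fun a => y a m)
    (fun a => congrFun (hy a) m) ?_) a
  simpa only [Finset.sum_apply, Pi.smul_apply] using congrFun hxy m

theorem arrowMapsInjective_self : ArrowMapsInjective k s t kQ := by
  classical
  have snd_decompose : ∀ (i : V) (z : {a // t a = i} → kQ),
      (∀ a, pv k V A s t (s a.1) • z a = z a) →
      ∀ a, (decompose (∑ b, pa k V A s t b.1 • z b)).2 a.1 = z a := by
    intro i z hz a
    simpa [decompose_pa_mul, Prod.snd_sum, Finset.sum_apply, Pi.single_apply, Subtype.coe_inj]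
      using hz a
  intro i x hx y hy hxy
  funext a
  rw [← snd_decompose i x hx a, ← snd_decompose i y hy a]
  exact congrArg (fun r => (decompose r).2 a.1) hxy

theorem ArrowMapsInjective.of_projective [Module.Projective (PathAlg k V A s t) M] :
    ArrowMapsInjective k s t M := by
  obtain ⟨sec, hsec⟩ := Module.projective_def.1 ‹_›
  exact .of_injective (Finsupp.lcoeFun ∘ₗ sec) (DFunLike.coe_injective.comp hsec.injective)
    (.pi fun _ => arrowMapsInjective_self)

end ArrowMaps

section Backward

variable {M : Type*} [AddCommGroup M] [Module (PathAlg k V A s t) M]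

theorem sum_pv_smul (m : M) : ∑ i, pv k V A s t i • m = m := by
  rw [← Finset.sum_smul, sum_pv, one_smul]

theorem pv_smul_sum_pa_smul [DecidableEq V] [Fintype A] {j : V} (x : {a // t a = j} → M) :
    pv k V A s t j • ∑ a, pa k V A s t a.1 • x a = ∑ a, pa k V A s t a.1 • x a := by
  rw [Finset.smul_sum]
  exact Finset.sum_congr rfl fun a _ => by rw [← mul_smul, pv_mul_pa, if_pos a.2.symm]

variable [Module k M]

variable (k s t M) in
def arrowSpan : Submodule k M :=
  Submodule.span k (⋃ a, Set.range fun m : M => pa k V A s t a • m)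

theorem pa_smul_mem_arrowSpan (a : A) (m : M) : pa k V A s t a • m ∈ arrowSpan k s t M :=
  Submodule.subset_span (Set.mem_iUnion.2 ⟨a, m, rfl⟩)

variable [IsScalarTower k (PathAlg k V A s t) M]

theorem subsingleton_of_arrowSpan_eq_top (hacyc : IsAcyclic s t)
    (h : arrowSpan k s t M = ⊤) : Subsingleton M := by
  have hpv : ∀ i (m : M), pv k V A s t i • m = 0 := by
    intro i
    induction i using hacyc.induction with | step i ih => ?_
    intro m
    induction (h ▸ Submodule.mem_top : m ∈ arrowSpan k s t M) using Submodule.span_induction with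
    | mem x hx =>
      obtain ⟨a, m', rfl⟩ := Set.mem_iUnion.1 hx
      beta_reduce
      by_cases ha : t a = i
      · rw [← pa_mul_pv_src, mul_smul, ih a ha, smul_zero, smul_zero]
      · rw [← mul_smul, pv_mul_pa_of_ne (Ne.symm ha), zero_smul]
    | zero => exact smul_zero _
    | add x y _ _ hx hy => rw [smul_add, hx, hy, add_zero]
    | smul c x _ hx => rw [smul_comm, hx, smul_zero]
  exact subsingleton_of_forall_eq 0 fun m => by
    rw [← sum_pv_smul (k := k) (s := s) (t := t) m]
    simp [hpv]

theorem exists_pv_smul_eq_self_notMem_arrowSpan (hacyc : IsAcyclic s t) [Nontrivial M] :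
    ∃ (i : V) (v : M), pv k V A s t i • v = v ∧ v ∉ arrowSpan k s t M := by
  obtain ⟨m, hm⟩ : ∃ m : M, m ∉ arrowSpan k s t M := by
    by_contra! h
    exact not_subsingleton M
      (subsingleton_of_arrowSpan_eq_top hacyc (eq_top_iff.2 fun m _ => h m))
  by_contra! h
  rw [← sum_pv_smul (k := k) (s := s) (t := t) m] at hm
  exact hm (Submodule.sum_mem _ fun i _ => h i _ (by rw [← mul_smul, pv_mul_self]))

variable [DecidableEq V] [Fintype A]

theorem exists_eq_sum_pa_mul_of_smul_mem {i j : V} {v : M} (hv : pv k V A s t i • v = v)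
    (hvJ : v ∉ arrowSpan k s t M) {x : kQ} (hxj : pv k V A s t j * x = x)
    (hxi : x * pv k V A s t i = x) (hxv : x • v ∈ arrowSpan k s t M) :
    ∃ y : {a // t a = j} → kQ, (∀ a, pv k V A s t (s a.1) * y a = y a ∧
      y a * pv k V A s t i = y a) ∧ x = ∑ a, pa k V A s t a.1 * y a := by
  obtain ⟨c, y, hy, hx⟩ := exists_pv_mul_eq x j
  have hx' : x = c • (pv k V A s t j * pv k V A s t i) +
      ∑ a, pa k V A s t a.1 * (y a * pv k V A s t i) := by
    conv_lhs => rw [← hxi, ← hxj, hx]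
    simp only [add_mul, Finset.sum_mul, smul_mul_assoc, mul_assoc]
  have hc : c • (pv k V A s t j * pv k V A s t i) = 0 := by
    by_cases hji : j = i
    · subst hji
      -- `c • v` lies in `arrowSpan`, which does not contain `v`
      have hcv : c • v + ∑ a, pa k V A s t a.1 • ((y a * pv k V A s t j) • v) ∈
          arrowSpan k s t M := by
        rwa [hx', add_smul, Finset.sum_smul, pv_mul_self, smul_assoc, hv,
          Finset.sum_congr rfl fun a _ => mul_smul _ _ v] at hxv
      have hcv := (Submodule.add_mem_iff_left _
        (Submodule.sum_mem _ fun a _ => pa_smul_mem_arrowSpan _ _)).1 hcv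
      rw [pv_mul_self]
      by_contra hc
      have hc0 : c ≠ 0 := by rintro rfl; exact hc (zero_smul _ _)
      exact hvJ (by simpa [smul_smul, inv_mul_cancel₀ hc0] using Submodule.smul_mem _ c⁻¹ hcv)
    · rw [pv_mul_pv_of_ne hji, smul_zero]
  refine ⟨fun a => y a * pv k V A s t i, fun a => ⟨by rw [← mul_assoc, hy a], ?_⟩, ?_⟩
  · rw [mul_assoc, pv_mul_self]
  · rw [hx', hc, zero_add]

theorem eq_zero_of_smul_eq_zero (hacyc : IsAcyclic s t) (hM : ArrowMapsInjective k s t M)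
    {i : V} {v : M} (hv : pv k V A s t i • v = v) (hvJ : v ∉ arrowSpan k s t M) (j : V) :
    ∀ x : kQ, pv k V A s t j * x = x → x * pv k V A s t i = x → x • v = 0 → x = 0 := by
  induction j using hacyc.induction with | step j ih => ?_
  intro x hxj hxi hxv
  obtain ⟨y, hy, rfl⟩ :=
    exists_eq_sum_pa_mul_of_smul_mem hv hvJ hxj hxi (hxv ▸ Submodule.zero_mem _)
  have hyv : (fun a => y a • v) = 0 := @hM j (fun a => y a • v)
    (fun a => by rw [← mul_smul, (hy a).1]) 0 (fun a => smul_zero _)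
    (by simpa [mul_smul, Finset.sum_smul] using hxv)
  exact Finset.sum_eq_zero fun a _ => by
    rw [ih a.1 a.2 _ (hy a).1 (hy a).2 (congrFun hyv a), mul_zero]

theorem smul_eq_zero_iff_mul_pv_eq_zero (hacyc : IsAcyclic s t)
    (hM : ArrowMapsInjective k s t M) {i : V} {v : M} (hv : pv k V A s t i • v = v)
    (hvJ : v ∉ arrowSpan k s t M) (r : kQ) : r • v = 0 ↔ r * pv k V A s t i = 0 := by
  refine ⟨fun hr => ?_, fun hr => by rw [← hv, ← mul_smul, hr, zero_smul]⟩
  rw [← one_mul (r * _), ← sum_pv, Finset.sum_mul]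
  refine Finset.sum_eq_zero fun j _ => eq_zero_of_smul_eq_zero hacyc hM hv hvJ j _
    (by rw [← mul_assoc, pv_mul_self]) (by rw [mul_assoc, mul_assoc, pv_mul_self])
    (by rw [mul_smul, mul_smul, hv, hr, smul_zero])

theorem exists_eq_sum_pa_smul_of_mem {i j : V} {v : M} (hv : pv k V A s t i • v = v)
    (hvJ : v ∉ arrowSpan k s t M) {w : M} (hw : w ∈ kQ ∙ v) (hwj : pv k V A s t j • w = w)
    (hwJ : w ∈ arrowSpan k s t M) :
    ∃ u : {a // t a = j} → M, (∀ a, u a ∈ kQ ∙ v ∧ pv k V A s t (s a.1) • u a = u a) ∧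
      w = ∑ a, pa k V A s t a.1 • u a := by
  obtain ⟨r, rfl⟩ := Submodule.mem_span_singleton.1 hw
  have hr : (pv k V A s t j * r * pv k V A s t i) • v = r • v := by
    rw [mul_smul, mul_smul, hv, hwj]
  obtain ⟨y, hy, hry⟩ := exists_eq_sum_pa_mul_of_smul_mem (j := j) hv hvJ
    (x := pv k V A s t j * r * pv k V A s t i) (by rw [← mul_assoc, ← mul_assoc, pv_mul_self])
    (by simp only [mul_assoc, pv_mul_self])
    (by rwa [hr])
  refine ⟨fun a => y a • v,
    fun a => ⟨Submodule.smul_mem _ _ (Submodule.mem_span_singleton_self v),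
      by rw [← mul_smul, (hy a).1]⟩, ?_⟩
  rw [← hr, hry, Finset.sum_smul]
  simp only [mul_smul]

theorem ArrowMapsInjective.quotient_span_singleton (hM : ArrowMapsInjective k s t M) {i : V}
    {v : M} (hv : pv k V A s t i • v = v) (hvJ : v ∉ arrowSpan k s t M) :
    ArrowMapsInjective k s t (M ⧸ kQ ∙ v) := by
  intro j x hx y hy hxy
  have lift : ∀ z : {a // t a = j} → M ⧸ kQ ∙ v, (∀ a, pv k V A s t (s a.1) • z a = z a) →
      ∃ z' : {a // t a = j} → M, (∀ a, pv k V A s t (s a.1) • z' a = z' a) ∧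
        (kQ ∙ v).mkQ ∘ z' = z := by
    intro z hz
    choose z' hz' using fun a => (kQ ∙ v).mkQ_surjective (z a)
    exact ⟨fun a => pv k V A s t (s a.1) • z' a, fun a => by rw [← mul_smul, pv_mul_self],
      funext fun a => by simp [hz', hz]⟩
  obtain ⟨x', hx', rfl⟩ := lift x hx
  obtain ⟨y', hy', rfl⟩ := lift y hy
  set w := ∑ a, pa k V A s t a.1 • x' a - ∑ a, pa k V A s t a.1 • y' a with hw
  have hwv : w ∈ kQ ∙ v := by
    rw [← Submodule.Quotient.mk_eq_zero, hw, Submodule.Quotient.mk_sub, sub_eq_zero,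
      ← Submodule.mkQ_apply, ← Submodule.mkQ_apply, map_sum, map_sum]
    simpa using hxy
  have hwj : pv k V A s t j • w = w := by
    rw [hw, smul_sub, pv_smul_sum_pa_smul, pv_smul_sum_pa_smul]
  have hwJ : w ∈ arrowSpan k s t M := Submodule.sub_mem _
    (Submodule.sum_mem _ fun a _ => pa_smul_mem_arrowSpan _ _)
    (Submodule.sum_mem _ fun a _ => pa_smul_mem_arrowSpan _ _)
  obtain ⟨u, hu, hwu⟩ := exists_eq_sum_pa_smul_of_mem hv hvJ hwv hwj hwJ
  have hxyu : x' = y' + u := @hM j x' hx' (y' + u)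
    (fun a => by simp [smul_add, hy' a, (hu a).2])
    (by simp only [Pi.add_apply, smul_add, Finset.sum_add_distrib, ← hwu, hw, add_sub_cancel])
  funext a
  simp [hxyu, (Submodule.Quotient.mk_eq_zero _).2 (hu a).1]

theorem projective_of_arrowMapsInjective (hacyc : IsAcyclic s t) [Module.Finite k M]
    (hM : ArrowMapsInjective k s t M) : Module.Projective kQ M := by
  induction hn : Module.finrank k M using Nat.strong_induction_on generalizing M with
  | _ n ih =>
  rcases subsingleton_or_nontrivial M with _ | _
  · infer_instance
  obtain ⟨i, v, hv, hvJ⟩ := exists_pv_smul_eq_self_notMem_arrowSpan (k := k) hacyc (M := M)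
  have : Module.Projective kQ (kQ ∙ v) := .span_singleton_of_isIdempotentElem
    (isIdempotentElem_pv i) (smul_eq_zero_iff_mul_pv_eq_zero hacyc hM hv hvJ)
  have hv0 : kQ ∙ v ≠ ⊥ := by
    rw [Ne, Submodule.span_singleton_eq_bot]
    rintro rfl
    exact hvJ (Submodule.zero_mem _)
  have : Module.Projective kQ (M ⧸ kQ ∙ v) := ih _ (hn ▸ (kQ ∙ v).finrank_quotient_lt hv0)
    (hM.quotient_span_singleton hv hvJ) rfl
  exact .of_submodule_quotient (kQ ∙ v)

end Backward

end PathAlg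

/-- For a finite acyclic quiver `Q` and a finite-dimensional `kQ`-module `M`, `M` is
projective if and only if for every vertex `i` the canonical map
`⊕_{α: j→i} e_j M → M`, `(x_α) ↦ Σ_α α·x_α`, is injective. -/
theorem projective_iff_arrow_maps_injective (V A : Type) [Fintype V] [Fintype A]
    [DecidableEq V] (s t : A → V)
    (hacyc : ∀ (n : ℕ) (p : Fin (n + 1) → A),
      (∀ m : Fin n, t (p m.castSucc) = s (p m.succ)) → s (p 0) ≠ t (p (Fin.last n)))
    (M : Type) [AddCommGroup M] [Module (PathAlg k V A s t) M]
    [Module k M] [IsScalarTower k (PathAlg k V A s t) M] [Module.Finite k M] :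
    Module.Projective (PathAlg k V A s t) M ↔
      ∀ i : V, ∀ x y : {a : A // t a = i} → M,
        (∀ a : {a : A // t a = i}, (pv k V A s t (s a.1)) • x a = x a) →
        (∀ a : {a : A // t a = i}, (pv k V A s t (s a.1)) • y a = y a) →
        (∑ a : {a : A // t a = i}, (pa k V A s t a.1) • x a
          = ∑ a : {a : A // t a = i}, (pa k V A s t a.1) • y a) →
        x = y :=
  ⟨fun _ i _ _ hx hy hxy => PathAlg.ArrowMapsInjective.of_projective i hx hy hxy,
    fun h => PathAlg.projective_of_arrowMapsInjective hacyc fun i x hx y hy => h i x y hx hy⟩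
end
end
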